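/- Suppose φ : E × E → ℝ satisfies the bound φ(x,y) ≤ C1·l²/t + C2·t/l + h·t for all l > ‖x−y‖ and all t > 0, where C1, C2 > 0 are constants, 0 ≤ h ≤ M, and E is a normed vector space. Then φ(x,y) ≤ (α·‖x−y‖ + β·‖x−y‖²)^{1/2}, where α = 4·C1·C2 and β = 4·C1·M. -/

import Mathlib

/-! Minimising `a / t + b * t` over `t > 0` (AM–GM, at `t = √a / √b`) turns the bound into
`φ(x,y) ≤ √(4 C1 l² (C2 / l + h))` for every `l > ‖x − y‖`; then use `h ≤ M` and let
`l ↓ ‖x − y‖`. -/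

theorem Real.le_sqrt_four_mul_of_forall_le_div_add_mul {a b c : ℝ} (ha : 0 < a) (hb : 0 < b)
    (hc : ∀ t : ℝ, 0 < t → c ≤ a / t + b * t) : c ≤ √(4 * a * b) := by
  have hsa : 0 < √a := Real.sqrt_pos.mpr ha
  have hsb : 0 < √b := Real.sqrt_pos.mpr hb
  have hopt : a / (√a / √b) + b * (√a / √b) = √(4 * a * b) := by
    rw [Real.sqrt_mul (by positivity), Real.sqrt_mul (by norm_num),
      show √(4 : ℝ) = 2 by rw [show (4 : ℝ) = 2 ^ 2 by norm_num, Real.sqrt_sq zero_le_two]]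
    field_simp
    rw [Real.sq_sqrt ha.le, Real.sq_sqrt hb.le]
    ring
  exact hopt ▸ hc _ (div_pos hsa hsb)

/-- Uniform bound for the free-time action potential: if
`φ(x,y) ≤ C1·l²/t + C2·t/l + h·t` for all `l > ‖x−y‖` and `t > 0`, with `0 ≤ h ≤ M`,
then `φ(x,y) ≤ (4C1C2‖x−y‖ + 4C1M‖x−y‖²)^{1/2}`. -/
theorem stmt_1 {E : Type*} [NormedAddCommGroup E] [NormedSpace ℝ E]
    (φ : E → E → ℝ) (C1 C2 M h : ℝ)
    (hC1 : 0 < C1) (hC2 : 0 < C2) (hh : 0 ≤ h) (hhM : h ≤ M)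
    (hbound : ∀ x y : E, ∀ l : ℝ, ‖x - y‖ < l → ∀ t : ℝ, 0 < t →
      φ x y ≤ C1 * l ^ 2 / t + C2 * t / l + h * t) :
    ∀ x y : E, φ x y ≤ Real.sqrt (4 * C1 * C2 * ‖x - y‖ + 4 * C1 * M * ‖x - y‖ ^ 2) := by
  intro x y
  have hbound_gt : ∀ l, ‖x - y‖ < l → φ x y ≤ √(4 * C1 * C2 * l + 4 * C1 * M * l ^ 2) := by
    intro l hl
    have hl0 : 0 < l := (norm_nonneg _).trans_lt hl
    calc φ x y ≤ √(4 * (C1 * l ^ 2) * (C2 / l + h)) :=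
          Real.le_sqrt_four_mul_of_forall_le_div_add_mul (by positivity) (by positivity)
            fun t ht => (hbound x y l hl t ht).trans_eq (by field_simp; ring)
      _ = √(4 * C1 * C2 * l + 4 * C1 * h * l ^ 2) := by congr 1; field_simp
      _ ≤ √(4 * C1 * C2 * l + 4 * C1 * M * l ^ 2) := by gcongr
  have hcont : Continuous fun l : ℝ => √(4 * C1 * C2 * l + 4 * C1 * M * l ^ 2) := by fun_prop
  exact ge_of_tendsto hcont.continuousWithinAt
    (eventually_nhdsWithin_of_forall fun l (hl : l ∈ Set.Ioi ‖x - y‖) => hbound_gt l hl)
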